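/- Let M = [[a,b],[c,d]] be a random 2×2 real matrix such that the pair of columns (a,c) and (b,d) is exchangeable, i.e., the random matrix obtained by swapping the two columns has the same distribution as M. Then the probability that M has both eigenvalues real is at least 1/2. -/

import Mathlib

open MeasureTheory
open scoped ProbabilityTheory

/-- If the two columns of a random 2×2 real matrix [[a,b],[c,d]] are exchangeable,
then the probability that it has both eigenvalues real is at least 1/2. -/
theorem exchangeable_columns_real_eigenvalues {Ω : Type*} [MeasureSpace Ω]
    [IsProbabilityMeasure (ℙ : Measure Ω)] (a b c d : Ω → ℝ)
    (ha : Measurable a) (hb : Measurable b) (hc : Measurable c) (hd : Measurable d)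
    (hexch : Measure.map (fun ω => ((a ω, c ω), (b ω, d ω))) ℙ =
      Measure.map (fun ω => ((b ω, d ω), (a ω, c ω))) ℙ) :
    ℙ {ω | (a ω + d ω) ^ 2 - 4 * (a ω * d ω - b ω * c ω) ≥ 0} ≥ 1 / 2 := by
  set f : (ℝ × ℝ) × (ℝ × ℝ) → ℝ :=
    fun p => (p.1.1 + p.2.2) ^ 2 - 4 * (p.1.1 * p.2.2 - p.2.1 * p.1.2) with hf
  have hfm : Measurable f := by fun_prop
  set S : Set ((ℝ × ℝ) × (ℝ × ℝ)) := {p | 0 ≤ f p} with hSdef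
  have hS : MeasurableSet S := measurableSet_le measurable_const hfm
  set φ : Ω → (ℝ × ℝ) × (ℝ × ℝ) := fun ω => ((a ω, c ω), (b ω, d ω)) with hφdef
  set ψ : Ω → (ℝ × ℝ) × (ℝ × ℝ) := fun ω => ((b ω, d ω), (a ω, c ω)) with hψdef
  have hφ : Measurable φ := by fun_prop
  have hψ : Measurable ψ := by fun_prop
  have key : ℙ (φ ⁻¹' S) = ℙ (ψ ⁻¹' S) := by
    rw [← Measure.map_apply hφ hS, ← Measure.map_apply hψ hS, hexch]
  have cover : (Set.univ : Set Ω) ⊆ φ ⁻¹' S ∪ ψ ⁻¹' S := by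
    intro ω _
    by_contra h
    simp only [Set.mem_union, Set.mem_preimage, hSdef, Set.mem_setOf_eq, hf, hφdef, hψdef,
      not_or, not_le] at h
    nlinarith [sq_nonneg (a ω + d ω), sq_nonneg (b ω + c ω), h.1, h.2]
  have h1 : (1 : ENNReal) ≤ ℙ (φ ⁻¹' S) + ℙ (ψ ⁻¹' S) := by
    calc (1 : ENNReal) = ℙ (Set.univ : Set Ω) := (measure_univ).symm
      _ ≤ ℙ (φ ⁻¹' S ∪ ψ ⁻¹' S) := measure_mono cover
      _ ≤ ℙ (φ ⁻¹' S) + ℙ (ψ ⁻¹' S) := measure_union_le _ _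
  rw [← key] at h1
  have hEq : {ω | (a ω + d ω) ^ 2 - 4 * (a ω * d ω - b ω * c ω) ≥ 0} = φ ⁻¹' S := by
    ext ω; simp [hSdef, hf, hφdef, ge_iff_le]
  rw [hEq]
  have h2 : (1 : ENNReal) ≤ 2 * ℙ (φ ⁻¹' S) := by rwa [two_mul]
  rw [ge_iff_le, ENNReal.div_le_iff (by norm_num) (by norm_num)]
  rwa [mul_comm] at h2
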